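/- Let T' be a tree with bipartition (A',B'), |A'| ≤ |B'|, γ(T') = |A'|, and let b' ∈ B' be a vertex that is not γ⁻-critical, i.e., γ(T' − b') ≥ γ(T'). Let T be obtained from T' by adding two new vertices a and b with edges ab and ab'. Then γ(T) = |A'| + 1. -/

import Mathlib

open Finset

variable {V : Type} [Fintype V] [DecidableEq V]

def IsDomSet (G : SimpleGraph V) (D : Finset V) : Prop :=
  ∀ v : V, v ∉ D → ∃ u ∈ D, G.Adj u v

noncomputable def domNum (G : SimpleGraph V) : ℕ :=
  sInf {n | ∃ D : Finset V, IsDomSet G D ∧ D.card = n}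

def IsVertexCover (G : SimpleGraph V) (C : Finset V) : Prop :=
  ∀ ⦃u v : V⦄, G.Adj u v → u ∈ C ∨ v ∈ C

noncomputable def coverNum (G : SimpleGraph V) : ℕ :=
  sInf {n | ∃ C : Finset V, IsVertexCover G C ∧ C.card = n}

def IsIndepFinset (G : SimpleGraph V) (I : Finset V) : Prop :=
  ∀ u ∈ I, ∀ v ∈ I, ¬ G.Adj u v

noncomputable def indepNum (G : SimpleGraph V) : ℕ :=
  sSup {n | ∃ I : Finset V, IsIndepFinset G I ∧ I.card = n}

def IsLeaf (G : SimpleGraph V) [DecidableRel G.Adj] (v : V) : Prop :=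
  G.degree v = 1

def IsSupport (G : SimpleGraph V) [DecidableRel G.Adj] (v : V) : Prop :=
  ∃ u, G.Adj v u ∧ IsLeaf G u

def IsWeakSupport (G : SimpleGraph V) [DecidableRel G.Adj] (v : V) : Prop :=
  ((G.neighborFinset v).filter fun l => G.degree l = 1).card = 1

def IsBipartition (G : SimpleGraph V) (A B : Finset V) : Prop :=
  A ∪ B = Finset.univ ∧ Disjoint A B ∧
    ∀ ⦃u v : V⦄, G.Adj u v → (u ∈ A ∧ v ∈ B) ∨ (u ∈ B ∧ v ∈ A)

/-- The tree obtained from `T'` by adding two new vertices `a = Sum.inr true` and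
`b = Sum.inr false`, with edges `ab` and `a b'`. -/
def attachP2at (T' : SimpleGraph V) (b' : V) : SimpleGraph (V ⊕ Bool) where
  Adj x y :=
    match x, y with
    | Sum.inl u, Sum.inl v => T'.Adj u v
    | Sum.inl u, Sum.inr c => c = true ∧ u = b'
    | Sum.inr c, Sum.inl v => c = true ∧ v = b'
    | Sum.inr c, Sum.inr d => c ≠ d
  symm := by
    constructor
    intro x y h
    cases x <;> cases y <;> simp_all
    · exact h.symm
    · exact Ne.symm h
  loopless := by
    constructor
    intro x
    cases x <;> simp

/-!
A minimum dominating set of `T'` together with `a` dominates `T`. Conversely, a dominating set `D`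
of `T` contains `a` or `b` (to dominate `b`), so its trace on `T'` has fewer than `|D|` vertices.
That trace dominates `T'` when `b' ∈ D`, and dominates `T' - b'` otherwise, because `b'` is then
the only vertex of `T'` that `a` can be needed for. Non-criticality of `b'` gives
`γ(T') + 1 ≤ |D|` in both cases.
-/

lemma Finset.card_preimage_lt_card {α β : Type*} {f : α → β} (hf : Function.Injective f)
    {D : Finset β} {x : β} (hx : x ∈ D) (hxf : x ∉ Set.range f) :
    (D.preimage f hf.injOn).card < D.card := by
  classical
  have hsub : (D.preimage f hf.injOn).image f ⊆ D :=
    (image_subset_iff_subset_preimage _).2 subset_rfl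
  rw [← card_image_of_injective _ hf]
  refine card_lt_card ((ssubset_iff_of_subset hsub).2 ⟨x, hx, fun h => ?_⟩)
  obtain ⟨y, -, rfl⟩ := mem_image.1 h
  exact hxf ⟨y, rfl⟩

section domNum

variable {W : Type} {G : SimpleGraph W}

lemma domNum_le_card {D : Finset W} (hD : IsDomSet G D) : domNum G ≤ D.card :=
  Nat.sInf_le ⟨D, hD, rfl⟩

lemma exists_isDomSet_card_eq_domNum [Fintype W] (G : SimpleGraph W) :
    ∃ D : Finset W, IsDomSet G D ∧ D.card = domNum G :=
  Nat.sInf_mem (s := {n | ∃ D : Finset W, IsDomSet G D ∧ D.card = n})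
    ⟨_, univ, fun v hv => absurd (mem_univ v) hv, rfl⟩

end domNum

namespace attachP2at

variable {W : Type} {T' : SimpleGraph W} {b' : W}

@[simp]
lemma adj_inr_inl {c : Bool} {v : W} :
    (attachP2at T' b').Adj (.inr c) (.inl v) ↔ c = true ∧ v = b' := Iff.rfl

@[simp]
lemma adj_inr_inr {c d : Bool} : (attachP2at T' b').Adj (.inr c) (.inr d) ↔ c ≠ d := Iff.rfl

lemma domNum_le [Fintype W] : domNum (attachP2at T' b') ≤ domNum T' + 1 := by
  obtain ⟨D, hD, hDcard⟩ := exists_isDomSet_card_eq_domNum T'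
  let D' := cons (.inr true) (D.map .inl) (by simp)
  have hdom : IsDomSet (attachP2at T' b') D' := by
    rintro (w | c) hw
    · obtain ⟨u, hu, huw⟩ := hD w fun h => hw (mem_cons_of_mem (mem_map_of_mem _ h))
      exact ⟨.inl u, mem_cons_of_mem (mem_map_of_mem _ hu), huw⟩
    · cases c
      · exact ⟨.inr true, mem_cons_self _ _, by simp⟩
      · exact absurd (mem_cons_self _ _) hw
  calc domNum (attachP2at T' b') ≤ D'.card := domNum_le_card hdom
    _ = domNum T' + 1 := by rw [card_cons, card_map, hDcard]

variable {D : Finset (W ⊕ Bool)}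

lemma exists_inr_mem (hD : IsDomSet (attachP2at T' b') D) : ∃ c, Sum.inr c ∈ D := by
  by_cases hb : Sum.inr false ∈ D
  · exact ⟨false, hb⟩
  obtain ⟨u | c, hu, hadj⟩ := hD _ hb
  · simpa using hadj.symm
  · exact ⟨c, hu⟩

lemma isDomSet_preimage_inl (hD : IsDomSet (attachP2at T' b') D) (hb' : Sum.inl b' ∈ D) :
    IsDomSet T' (D.preimage Sum.inl Sum.inl_injective.injOn) := by
  intro v hv
  rw [mem_preimage] at hv
  obtain ⟨u | c, hu, hadj⟩ := hD _ hv
  · exact ⟨u, mem_preimage.2 hu, hadj⟩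
  · obtain ⟨-, rfl⟩ := adj_inr_inl.1 hadj
    exact absurd hb' hv

lemma isDomSet_induce_erase [Fintype W] [DecidableEq W] (hD : IsDomSet (attachP2at T' b') D)
    (hb' : Sum.inl b' ∉ D) :
    IsDomSet (T'.induce ↑(univ.erase b'))
      (D.preimage (Sum.inl ∘ Subtype.val)
        (Sum.inl_injective.comp Subtype.val_injective).injOn) := by
  rintro ⟨v, hvb⟩ hv
  rw [mem_preimage] at hv
  obtain ⟨u | c, hu, hadj⟩ := hD _ hv
  · have hub : u ≠ b' := by rintro rfl; exact hb' hu
    exact ⟨⟨u, by simpa using hub⟩, mem_preimage.2 hu, hadj⟩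
  · have hvb' : v = b' := (adj_inr_inl.1 hadj).2
    simp [hvb'] at hvb

lemma min_domNum_add_one_le [Fintype W] [DecidableEq W] :
    min (domNum T') (domNum (T'.induce ↑(univ.erase b'))) + 1 ≤ domNum (attachP2at T' b') := by
  obtain ⟨D, hD, hDcard⟩ := exists_isDomSet_card_eq_domNum (attachP2at T' b')
  obtain ⟨c, hc⟩ := exists_inr_mem hD
  rw [← hDcard, Nat.add_one_le_iff]
  by_cases hb' : Sum.inl b' ∈ D
  · exact (min_le_left _ _).trans_lt <| (domNum_le_card (isDomSet_preimage_inl hD hb')).trans_lt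
      <| card_preimage_lt_card Sum.inl_injective hc (by simp)
  · exact (min_le_right _ _).trans_lt <| (domNum_le_card (isDomSet_induce_erase hD hb')).trans_lt
      <| card_preimage_lt_card (Sum.inl_injective.comp Subtype.val_injective) hc (by simp)

lemma domNum_eq_add_one [Fintype W] [DecidableEq W]
    (h : domNum T' ≤ domNum (T'.induce ↑(univ.erase b'))) :
    domNum (attachP2at T' b') = domNum T' + 1 :=
  le_antisymm domNum_le <| by
    simpa [min_eq_left h] using min_domNum_add_one_le (T' := T') (b' := b')

end attachP2at

theorem operation_O4_general (T' : SimpleGraph V) (A' : Finset V) (b' : V)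
    (hdom : domNum T' = A'.card)
    (hnotcrit : domNum T' ≤ domNum (T'.induce ↑(Finset.univ.erase b'))) :
    domNum (attachP2at T' b') = A'.card + 1 := by
  rw [attachP2at.domNum_eq_add_one hnotcrit, hdom]

theorem operation_O4 (T' : SimpleGraph V) (A' B' : Finset V) (b' : V)
    (htree : T'.IsTree) (hbip : IsBipartition T' A' B') (hAB : A'.card ≤ B'.card)
    (hb' : b' ∈ B') (hdom : domNum T' = A'.card)
    (hnotcrit : domNum T' ≤ domNum (T'.induce ↑(Finset.univ.erase b'))) :
    domNum (attachP2at T' b') = A'.card + 1 :=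
  operation_O4_general T' A' b' hdom hnotcrit
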